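/- arXiv:2009.06986 — 4 statements merged into one kernel-verified Lean document; each statement's English description precedes it below -/
import Mathlib

section
/- Let R be a commutative ring, M an R-module, N a module over the polynomial ring R[X], and φ : PolynomialModule R M → N an R[X]-linear map. Let e be a natural number and β ∈ R[X] a monic polynomial of degree e+1 such that β • n = 0 for every n ∈ N. Assume that the map M^{e+1} → N sending (m_0,…,m_e) to φ(Σ_{i=0}^{e} m_i·X^i) is bijective. Then φ is surjective and its kernel equals {β • q : q ∈ PolynomialModule R M}; consequently φ induces an isomorphism of PolynomialModule R M modulo the submodule β • (PolynomialModule R M) onto N. -/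
/-!
Division by the monic polynomial `β` works coefficientwise in `PolynomialModule R M`: writing
`X ^ n = β * (X ^ n /ₘ β) + X ^ n %ₘ β` shows that every element is `β • q'` plus a part of degree
`< deg β`. Since `φ` kills `β • q'`, the bijectivity hypothesis forces the low-degree part of an
element of `ker φ` to vanish, so `ker φ = β • PolynomialModule R M`; the isomorphism is then the
first isomorphism theorem.
-/

open Polynomial

namespace PolynomialModule

variable {R M : Type*} [CommRing R] [AddCommGroup M] [Module R M]

theorem exists_eq_smul_add_sum_single {β : R[X]} (hβ : β.Monic) {d : ℕ} (hd : β.degree ≤ d)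
    (q : PolynomialModule R M) :
    ∃ (q' : PolynomialModule R M) (m : Fin d → M),
      q = β • q' + ∑ i : Fin d, single R (i : ℕ) (m i) := by
  induction q using PolynomialModule.induction_linear with
  | zero => exact ⟨0, 0, by simp⟩
  | add q₁ q₂ h₁ h₂ =>
    obtain ⟨q₁', m₁, rfl⟩ := h₁
    obtain ⟨q₂', m₂, rfl⟩ := h₂
    refine ⟨q₁' + q₂', m₁ + m₂, ?_⟩
    simp only [smul_add, Pi.add_apply, single_add, Finset.sum_add_distrib]
    abel
  | single n a =>
    set p : R[X] := monomial n 1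
    refine ⟨(p /ₘ β) • single R 0 a, fun i => (p %ₘ β).coeff i • a, ?_⟩
    calc single R n a = (p %ₘ β + β * (p /ₘ β)) • single R 0 a := by
          rw [modByMonic_add_div, monomial_smul_single, add_zero, one_smul]
      _ = β • (p /ₘ β) • single R 0 a +
            ∑ i : Fin d, monomial i ((p %ₘ β).coeff i) • single R 0 a := by
          rw [add_smul, mul_smul, add_comm, ← Finset.sum_smul, sum_modByMonic_coeff hβ hd]
      _ = _ := by simp only [monomial_smul_single, add_zero]

variable {N : Type*} [AddCommGroup N] [Module R[X] N]

theorem ker_eq_range_smul_id {φ : PolynomialModule R M →ₗ[R[X]] N} {β : R[X]} (hβ : β.Monic)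
    {d : ℕ} (hd : β.degree ≤ d) (hN : ∀ n : N, β • n = 0)
    (hinj : Function.Injective
      (fun m : Fin d → M => φ (∑ i : Fin d, single R (i : ℕ) (m i)))) :
    LinearMap.ker φ = LinearMap.range (β • LinearMap.id) := by
  refine le_antisymm (fun q hq => ?_) ?_
  · obtain ⟨q', m, rfl⟩ := exists_eq_smul_add_sum_single hβ hd q
    have hm : m = 0 := hinj <| by
      simpa [LinearMap.map_smul_of_tower, hN] using hq
    exact ⟨q', by simp [hm]⟩
  · rintro _ ⟨q, rfl⟩
    simp [hN]

end PolynomialModule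

theorem stmt_1 {R M N : Type*} [CommRing R] [AddCommGroup M] [Module R M]
    [AddCommGroup N] [Module R[X] N]
    (φ : PolynomialModule R M →ₗ[R[X]] N)
    (e : ℕ) (β : R[X]) (hβmonic : β.Monic) (hβdeg : β.natDegree = e + 1)
    (hβ : ∀ n : N, β • n = 0)
    (hbij : Function.Bijective
      (fun m : Fin (e + 1) → M =>
        φ (∑ i : Fin (e + 1), PolynomialModule.single R (i : ℕ) (m i)))) :
    Function.Surjective φ ∧
      LinearMap.ker φ =
        LinearMap.range (β • (LinearMap.id : PolynomialModule R M →ₗ[R[X]] PolynomialModule R M)) ∧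
      ∃ ψ : (PolynomialModule R M ⧸
          LinearMap.range (β • (LinearMap.id : PolynomialModule R M →ₗ[R[X]] PolynomialModule R M)))
          ≃ₗ[R[X]] N,
        ∀ q : PolynomialModule R M, ψ (Submodule.Quotient.mk q) = φ q := by
  have hsurj : Function.Surjective φ := fun n =>
    let ⟨_, hm⟩ := hbij.surjective n
    ⟨_, hm⟩
  have hker := PolynomialModule.ker_eq_range_smul_id hβmonic
    (degree_le_of_natDegree_le hβdeg.le) hβ hbij.injective
  exact ⟨hsurj, hker,
    (Submodule.quotEquivOfEq _ _ hker.symm).trans (φ.quotKerEquivOfSurjective hsurj),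
    fun _ => rfl⟩
end

section
/- Let R be a commutative ring, α ∈ R[X], and k a natural number. Let B and C be commutative rings, ψ : R[X] → B a surjective ring homomorphism whose kernel is the principal ideal (α), ρ : B → C a surjective ring homomorphism, and σ : C → B an injective additive map satisfying σ(ρ(b)·c) = b·σ(c) for all b ∈ B and c ∈ C, and σ(1) = ψ(X)^k. Then the kernel of the composite ρ∘ψ is the ideal quotient ((α) : (X^k)) = {f ∈ R[X] : f·X^k ∈ (α)}, and hence ρ∘ψ induces a ring isomorphism R[X]/((α) : (X^k)) ≅ C. -/
/-!
Taking `c = 1` in the projection formula gives `σ (ρ b) = b * σ 1 = b * ψ (X ^ k)`, so injectivity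
of `σ` makes `ker ρ` the annihilator of `ψ (X ^ k)`; pulling back along `ψ`, whose kernel is `(α)`,
turns this annihilator into the ideal quotient `((α) : X ^ k)`.
-/

open Polynomial

theorem RingHom.mem_ker_iff_mul_eq_zero_of_projection {B C : Type*} [CommRing B] [Semiring C]
    (ρ : B →+* C) (σ : C →+ B) (hσinj : Function.Injective σ)
    (hproj : ∀ (b : B) (c : C), σ (ρ b * c) = b * σ c) (b : B) :
    b ∈ RingHom.ker ρ ↔ b * σ 1 = 0 := by
  have hσρ : σ (ρ b) = b * σ 1 := by simpa using hproj b 1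
  rw [RingHom.mem_ker, ← hσρ, map_eq_zero_iff σ hσinj]

theorem RingHom.ker_comp_eq_colon_of_projection {A B C : Type*} [CommRing A] [CommRing B]
    [Semiring C] (ψ : A →+* B) (ρ : B →+* C) (σ : C →+ B) (hσinj : Function.Injective σ)
    (hproj : ∀ (b : B) (c : C), σ (ρ b * c) = b * σ c) (t : A) (hσ1 : σ 1 = ψ t) :
    RingHom.ker (ρ.comp ψ) = (RingHom.ker ψ).colon (Ideal.span {t}) := by
  ext f
  rw [Ideal.mem_colon_span_singleton, RingHom.mem_ker, RingHom.mem_ker, map_mul, ← hσ1,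
    ← ρ.mem_ker_iff_mul_eq_zero_of_projection σ hσinj hproj, RingHom.mem_ker, RingHom.comp_apply]

theorem stmt_4 {R B C : Type*} [CommRing R] [CommRing B] [CommRing C]
    (α : R[X]) (k : ℕ)
    (ψ : R[X] →+* B) (hψsurj : Function.Surjective ψ)
    (hψker : RingHom.ker ψ = Ideal.span {α})
    (ρ : B →+* C) (hρsurj : Function.Surjective ρ)
    (σ : C →+ B) (hσinj : Function.Injective σ)
    (hproj : ∀ (b : B) (c : C), σ (ρ b * c) = b * σ c)
    (hσ1 : σ 1 = ψ X ^ k) :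
    RingHom.ker (ρ.comp ψ) = (Ideal.span {α}).colon (Ideal.span {X ^ k} : Ideal R[X]) ∧
      ∃ θ : (R[X] ⧸ (Ideal.span {α}).colon (Ideal.span {X ^ k} : Ideal R[X])) ≃+* C,
        ∀ f : R[X],
          θ (Ideal.Quotient.mk ((Ideal.span {α}).colon (Ideal.span {X ^ k} : Ideal R[X])) f) = ρ (ψ f) := by
  have hker : RingHom.ker (ρ.comp ψ) =
      (Ideal.span {α}).colon (Ideal.span {X ^ k} : Ideal R[X]) := by
    rw [← hψker]
    exact ψ.ker_comp_eq_colon_of_projection ρ σ hσinj hproj (X ^ k) (by rw [hσ1, map_pow])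
  exact ⟨hker, (Ideal.quotEquivOfEq hker.symm).trans
    (RingHom.quotientKerEquivOfSurjective (hρsurj.comp hψsurj)), fun _ => rfl⟩
end

section
/- Let X be a type, p ∈ X, k a natural number, and let x and y be finite multisets over X with card y = card x. If y ≤ x + (replicate k p) (multiset containment, where replicate k p is the multiset consisting of k copies of p), then either y = x, or there exists a multiset s over X with s ≤ x, card s < card y, and y = s + replicate (card y − card s) p. -/
/-!
Take `s = y ∩ x`. Since `y ≤ x + replicate k p`, the complement `y - x` consists of copies of `p`,
so `y = s + replicate (card y - card s) p`. Either `s` is strictly smaller than `y`, or `s = y`,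
in which case `y ≤ x` and equal cardinalities force `y = x`.
-/

namespace Multiset

variable {α : Type*} [DecidableEq α]

theorem eq_inter_add_replicate_of_le_add_replicate {x y : Multiset α} {p : α} {k : ℕ}
    (hle : y ≤ x + replicate k p) :
    y = y ∩ x + replicate (card y - card (y ∩ x)) p := by
  have hsub : y - x ≤ replicate k p := tsub_le_iff_left.mpr hle
  obtain ⟨n, -, hn⟩ := le_replicate_iff.mp hsub
  have hy : y = y ∩ x + replicate n p := by rw [← hn, add_comm, sub_add_inter]
  have hn_card : n = card y - card (y ∩ x) := by
    have := congrArg card hy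
    rw [card_add, card_replicate] at this
    omega
  rwa [← hn_card]

end Multiset

theorem stmt_9 {X : Type*} (p : X) (k : ℕ) (x y : Multiset X)
    (hcard : Multiset.card y = Multiset.card x)
    (hle : y ≤ x + Multiset.replicate k p) :
    y = x ∨ ∃ s : Multiset X, s ≤ x ∧ Multiset.card s < Multiset.card y ∧
      y = s + Multiset.replicate (Multiset.card y - Multiset.card s) p := by
  classical
  rcases (Multiset.card_le_card (Multiset.inter_le_left (s := y) (t := x))).lt_or_eq
    with hlt | heq
  · exact Or.inr ⟨y ∩ x, Multiset.inter_le_right, hlt,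
      Multiset.eq_inter_add_replicate_of_le_add_replicate hle⟩
  · have hinter : y ∩ x = y := Multiset.eq_of_le_of_card_le Multiset.inter_le_left heq.ge
    have hyx : y ≤ x := hinter ▸ Multiset.inter_le_right
    exact Or.inl (Multiset.eq_of_le_of_card_le hyx hcard.ge)
end

section
/- Let X be a type, p ∈ X, k a natural number, and let x and y be finite multisets over X with card y = card x. If k ≥ card y, then y ≤ x + (replicate k p) holds if and only if either y = x, or there exists a multiset s over X with s ≤ x, card s < card y, and y = s + replicate (card y − card s) p. -/
theorem stmt_10 {X : Type*} (p : X) (k : ℕ) (x y : Multiset X)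
    (hcard : Multiset.card y = Multiset.card x)
    (hk : k ≥ Multiset.card y) :
    y ≤ x + Multiset.replicate k p ↔
      (y = x ∨ ∃ s : Multiset X, s ≤ x ∧ Multiset.card s < Multiset.card y ∧
        y = s + Multiset.replicate (Multiset.card y - Multiset.card s) p) := by
  classical
  constructor
  · intro h
    set s := y - Multiset.replicate k p with hs
    have hsx : s ≤ x := Multiset.sub_le_iff_le_add.mpr h
    have hcp : Multiset.count p y ≤ k := le_trans (Multiset.count_le_card p y) hk
    have hyeq : y = s + Multiset.replicate (Multiset.count p y) p := by
      ext a
      simp only [hs, Multiset.count_add, Multiset.count_sub, Multiset.count_replicate]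
      split_ifs with h
      · subst h; omega
      · omega
    have hcs : Multiset.card s + Multiset.count p y = Multiset.card y := by
      conv_rhs => rw [hyeq]
      simp
    by_cases hzero : Multiset.count p y = 0
    · left
      have hsy : s = y := by rw [hyeq, hzero]; simp
      rw [← hsy] at hcard
      exact hsy ▸ Multiset.eq_of_le_of_card_le hsx hcard.ge
    · right
      refine ⟨s, hsx, by omega, ?_⟩
      have : Multiset.card y - Multiset.card s = Multiset.count p y := by omega
      rw [this]; exact hyeq
  · rintro (rfl | ⟨s, hsx, hcs, hy⟩)
    · exact Multiset.le_add_right _ _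
    · rw [hy]
      exact add_le_add hsx
        ((Multiset.replicate_le_replicate p).mpr (by omega))
end
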